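/- arXiv:1112.3721 — 3 statements merged into one kernel-verified Lean document; each statement's English description precedes it below -/
import Mathlib

section
/- Let G be a finite simple connected graph with m ≥ 1 edges. Then ∑_{i ∈ V(G)} (2^{deg(i)} − 1) − m = 2m − 1 if and only if G is a path graph (the line graph on m+1 vertices with edges {1,2},{2,3},...,{m,m+1}). -/
/-!
Since `2 * d ≤ 2 ^ d`, with equality exactly for `d ∈ {1, 2}`, the handshake lemma gives
`∑ v, (2 ^ deg v - 1) ≥ 4 m - n` for any graph with `n` vertices and `m` edges; a connected graph
has `n ≤ m + 1`, so the sum is at least `3 m - 1`, with equality iff `n = m + 1` and all degrees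
are 1 or 2. In a connected graph of maximum degree 2 a longest path visits every vertex (it cannot
be extended at its ends, and its interior vertices have no further neighbours); when `n = m + 1`
it has `m` edges, hence uses all of them, and the graph is a path.
-/

open Finset

lemma two_mul_lt_two_pow {d : ℕ} (hd : 3 ≤ d) : 2 * d < 2 ^ d := by
  induction d, hd using Nat.le_induction with
  | base => norm_num
  | succ d _ ih => rw [pow_succ]; omega

lemma two_mul_le_two_pow (d : ℕ) : 2 * d ≤ 2 ^ d := by
  rcases le_or_gt 3 d with hd | hd
  · exact (two_mul_lt_two_pow hd).le
  · interval_cases d <;> norm_num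

lemma two_pow_eq_two_mul_iff {d : ℕ} : 2 ^ d = 2 * d ↔ d = 1 ∨ d = 2 := by
  refine ⟨fun h => ?_, by rintro (rfl | rfl) <;> rfl⟩
  by_contra! hd
  rcases le_or_gt 3 d with h3 | h3
  · exact (two_mul_lt_two_pow h3).ne' h
  · interval_cases d <;> simp_all

namespace SimpleGraph

variable {V : Type*}

section Degrees

variable [Fintype V] (G : SimpleGraph V) [DecidableRel G.Adj]

lemma sum_two_mul_degree_sub_one :
    ∑ v, (2 * G.degree v - 1 : ℤ) = 4 * #G.edgeFinset - Fintype.card V := by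
  rw [sum_sub_distrib, ← mul_sum, ← Nat.cast_sum, sum_degrees_eq_twice_card_edges]
  simp only [Nat.cast_mul, Nat.cast_ofNat, sum_const, card_univ, Int.nsmul_eq_mul, mul_one]
  ring

lemma four_mul_card_edgeFinset_sub_card_le_sum_two_pow_degree :
    4 * #G.edgeFinset - Fintype.card V ≤ ∑ v, (2 ^ G.degree v - 1 : ℤ) := by
  rw [← sum_two_mul_degree_sub_one]
  gcongr with v
  exact_mod_cast two_mul_le_two_pow (G.degree v)

lemma sum_two_pow_degree_eq_iff :
    ∑ v, (2 ^ G.degree v - 1 : ℤ) = 4 * #G.edgeFinset - Fintype.card V ↔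
      ∀ v, G.degree v = 1 ∨ G.degree v = 2 := by
  rw [← sum_two_mul_degree_sub_one, eq_comm,
    sum_eq_sum_iff_of_le fun v _ => sub_le_sub_right (mod_cast two_mul_le_two_pow (G.degree v)) 1]
  simp only [mem_univ, true_implies, sub_left_inj]
  exact forall_congr' fun v => by rw [eq_comm]; exact_mod_cast two_pow_eq_two_mul_iff

end Degrees

lemma degree_pathGraph_le_two {n : ℕ} (u : Fin n)
    [Fintype ((pathGraph n).neighborSet u)] : (pathGraph n).degree u ≤ 2 := by
  rw [← card_neighborFinset_eq_degree]
  calc #((pathGraph n).neighborFinset u) ≤ #({u.val - 1, u.val + 1} : Finset ℕ) :=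
        card_le_card_of_injOn Fin.val (fun v hv => by
          simp only [coe_neighborFinset, mem_neighborSet, pathGraph_adj] at hv
          simp only [coe_insert, coe_singleton, Set.mem_insert_iff, Set.mem_singleton_iff]
          omega) Fin.val_injective.injOn
    _ ≤ 2 := card_le_two

variable {G : SimpleGraph V}

lemma Walk.IsPath.mem_support_of_adj_getVert [Fintype V] [DecidableRel G.Adj]
    (hdeg : ∀ v, G.degree v ≤ 2) {u v y : V} {p : G.Walk u v} (hp : p.IsPath) {i : ℕ}
    (hi₀ : i ≠ 0) (hi : i < p.length) (hadj : G.Adj (p.getVert i) y) : y ∈ p.support := by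
  have hnbr : p.toSubgraph.neighborSet (p.getVert i) = G.neighborSet (p.getVert i) := by
    refine Set.eq_of_subset_of_ncard_le (p.toSubgraph.neighborSet_subset _) ?_ (Set.toFinite _)
    rw [hp.ncard_neighborSet_toSubgraph_internal_eq_two hi₀ hi, Set.ncard_eq_toFinset_card',
      ← neighborFinset_def, card_neighborFinset_eq_degree]
    exact hdeg _
  have : p.toSubgraph.Adj (p.getVert i) y := by
    rw [← Subgraph.mem_neighborSet, hnbr]; exact hadj
  simpa [Walk.verts_toSubgraph] using this.snd_mem

lemma Connected.exists_isHamiltonian_of_degree_le_two [Fintype V] [DecidableEq V]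
    [DecidableRel G.Adj] (hconn : G.Connected) (hdeg : ∀ v, G.degree v ≤ 2) :
    ∃ (a b : V) (p : G.Walk a b), p.IsHamiltonian := by
  have : Nonempty (Σ a b, G.Path a b) := let ⟨v⟩ := hconn.nonempty; ⟨⟨v, v, Path.nil⟩⟩
  obtain ⟨⟨a, b, p⟩, hmax⟩ := Finite.exists_max fun q : Σ a b, G.Path a b => q.2.2.1.length
  have hstart : ∀ {u w : V} (q : G.Walk u w), q.IsPath → q.length = p.1.length →
      ∀ y, G.Adj u y → y ∈ q.support := by
    intro u w q hq hlen y hy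
    by_contra hyq
    have := hmax ⟨y, w, ⟨.cons hy.symm q, (Walk.cons_isPath_iff _ _).2 ⟨hq, hyq⟩⟩⟩
    simp only [Walk.length_cons] at this
    omega
  have hclosed : ∀ x ∈ p.1.support, ∀ y, G.Adj x y → y ∈ p.1.support := by
    intro x hx y hxy
    obtain ⟨i, rfl, hi⟩ := Walk.mem_support_iff_exists_getVert.1 hx
    rcases Nat.eq_zero_or_pos i with rfl | hi₀
    · exact hstart p.1 p.2 rfl y (by simpa using hxy)
    rcases hi.lt_or_eq with hi | rfl
    · exact p.2.mem_support_of_adj_getVert hdeg hi₀.ne' hi hxy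
    · simpa using hstart p.1.reverse p.2.reverse (by simp) y (by simpa using hxy)
  refine ⟨a, b, p.1, p.2.isHamiltonian_of_mem fun w => by_contra fun hw => ?_⟩
  obtain ⟨d, -, hd₁, hd₂⟩ := (hconn.preconnected a w).some.exists_boundary_dart
    {x | x ∈ p.1.support} p.1.start_mem_support hw
  exact hd₂ (hclosed _ hd₁ _ d.adj)

lemma Walk.IsHamiltonian.toSubgraph_eq_top [Fintype V] [DecidableEq V] [Fintype G.edgeSet]
    {a b : V} {p : G.Walk a b} (hp : p.IsHamiltonian) (hE : #G.edgeFinset ≤ p.length) :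
    p.toSubgraph = ⊤ := by
  have hedges : p.edges.toFinset = G.edgeFinset :=
    eq_of_subset_of_card_le
      (fun e he => mem_edgeFinset.2 (p.edges_subset_edgeSet (List.mem_toFinset.1 he)))
      (by rwa [List.toFinset_card_of_nodup hp.isPath.isTrail.edges_nodup, Walk.length_edges])
  ext u v
  · simp [Walk.verts_toSubgraph, hp.mem_support]
  · rw [Walk.adj_toSubgraph_iff_mem_edges, ← List.mem_toFinset, hedges, mem_edgeFinset,
      SimpleGraph.mem_edgeSet, Subgraph.top_adj]

lemma Connected.nonempty_iso_pathGraph [Fintype V] [DecidableEq V] [DecidableRel G.Adj]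
    (hconn : G.Connected) (hdeg : ∀ v, G.degree v ≤ 2)
    (hcard : Fintype.card V = #G.edgeFinset + 1) :
    Nonempty (G ≃g pathGraph (#G.edgeFinset + 1)) := by
  obtain ⟨a, b, p, hp⟩ := hconn.exists_isHamiltonian_of_degree_le_two hdeg
  have hlen : p.length = #G.edgeFinset := by rw [hp.length_eq, hcard, Nat.add_sub_cancel]
  have e := hp.isPath.pathGraphIsoToSubgraph
  rw [hp.toSubgraph_eq_top hlen.ge, hlen] at e
  exact ⟨(e.trans Subgraph.topIso).symm⟩

end SimpleGraph

open SimpleGraph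

theorem stmt2 {V : Type*} [Fintype V] [DecidableEq V] (G : SimpleGraph V)
    [DecidableRel G.Adj] (m : ℕ) (hm : G.edgeFinset.card = m)
    (hconn : G.Connected) (hm1 : 1 ≤ m) :
    (∑ i : V, ((2 : ℤ) ^ G.degree i - 1)) - m = 2 * m - 1 ↔
      Nonempty (G ≃g SimpleGraph.pathGraph (m + 1)) := by
  subst hm
  constructor
  · intro hsum
    have hcard_le := hconn.card_vert_le_card_edgeSet_add_one
    rw [Nat.card_eq_fintype_card, Nat.card_eq_fintype_card, ← edgeFinset_card] at hcard_le
    have hcard_ge := G.four_mul_card_edgeFinset_sub_card_le_sum_two_pow_degree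
    have hcard : Fintype.card V = #G.edgeFinset + 1 := by omega
    have hdeg := G.sum_two_pow_degree_eq_iff.1 (by omega)
    exact hconn.nonempty_iso_pathGraph (fun v => by have := hdeg v; omega) hcard
  · rintro ⟨e⟩
    have hcard : Fintype.card V = #G.edgeFinset + 1 := by simpa using Fintype.card_congr e.toEquiv
    have : Nontrivial V := Fintype.one_lt_card_iff_nontrivial.1 (by omega)
    have hdeg : ∀ v, G.degree v = 1 ∨ G.degree v = 2 := by
      intro v
      have h₁ := hconn.preconnected.degree_pos_of_nontrivial v
      have h₂ : G.degree v ≤ 2 := by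
        classical exact (e.degree_eq v).symm.trans_le (degree_pathGraph_le_two (e v))
      omega
    have := G.sum_two_pow_degree_eq_iff.2 hdeg
    omega
end

section
/- Not every integer between 2m−1 and 2^m−1 is attained as ∑_{i ∈ V(G)} (2^{deg(i)} − 1) − m for a connected graph G with m edges: for m = 4, the set of attained values is exactly {7, 8, 9, 10, 15}. -/
/-!
A connected graph with 4 edges has at most 5 vertices, and at least 4 because `K₃` has only
3 edges. Writing `c k` for the number of vertices of degree `k`, the quantity equals
`∑ₖ c k (2 ^ k - 1) - 4`, and the constraints `∑ c k = n`, `∑ k c k = 8`, `c 0 = 0` leave only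
the degree sequences of the path, the spider and the star (`n = 5`) and those of the 4-cycle,
the paw and `(3, 3, 1, 1)` (`n = 4`). The last one is not graphic: two vertices adjacent to
everything leave no vertex of degree 1.
-/

open Finset SimpleGraph

theorem Finset.sum_comp_eq_sum_range_card_nsmul {ι M : Type*} [Fintype ι] [AddCommMonoid M]
    (g : ι → ℕ) (f : ℕ → M) {N : ℕ} (hN : ∀ i, g i < N) :
    ∑ i, f (g i) = ∑ k ∈ range N, #{i | g i = k} • f k := by
  rw [← sum_fiberwise_of_maps_to' (t := range N) (fun i _ => mem_range.2 (hN i))]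
  exact sum_congr rfl fun k _ => sum_const _

namespace SimpleGraph

variable {V : Type*} [Fintype V] {G : SimpleGraph V} [DecidableRel G.Adj]

lemma Connected.card_le_card_edgeFinset_add_one (h : G.Connected) :
    Fintype.card V ≤ #G.edgeFinset + 1 := by
  simpa [Nat.card_eq_fintype_card, edgeFinset_card] using h.card_vert_le_card_edgeSet_add_one

lemma two_le_degree_of_isUniversal [DecidableEq V] {a b v : V} (hab : a ≠ b)
    (ha : G.IsUniversal a) (hb : G.IsUniversal b) (hva : v ≠ a) (hvb : v ≠ b) :
    2 ≤ G.degree v := by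
  have hsub : {a, b} ⊆ G.neighborFinset v := by
    simp only [insert_subset_iff, singleton_subset_iff, mem_neighborFinset]
    exact ⟨(ha hva.symm).symm, (hb hvb.symm).symm⟩
  simpa [card_pair hab] using card_le_card hsub

lemma card_degree_eq_one_eq_zero_of_two_universal [DecidableEq V] (hV : 3 ≤ Fintype.card V)
    (h : 1 < #{v | G.degree v = Fintype.card V - 1}) : #{v | G.degree v = 1} = 0 := by
  obtain ⟨a, ha, b, hb, hab⟩ := one_lt_card.1 h
  simp only [mem_filter, mem_univ, true_and] at ha hb
  simp only [card_eq_zero, filter_eq_empty_iff, mem_univ, true_implies]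
  intro v hv
  have := two_le_degree_of_isUniversal (v := v) hab ((G.degree_eq_card_sub_one a).1 ha)
    ((G.degree_eq_card_sub_one b).1 hb) (by rintro rfl; omega) (by rintro rfl; omega)
  omega

theorem sum_two_pow_degree_sub_one_sub_four_mem [DecidableEq V] (hG : G.Connected)
    (hE : #G.edgeFinset = 4) :
    ∑ v, ((2 : ℤ) ^ G.degree v - 1) - 4 ∈ ({7, 8, 9, 10, 15} : Set ℤ) := by
  have hn5 : Fintype.card V ≤ 5 := by
    have := hG.card_le_card_edgeFinset_add_one; omega
  have hn4 : 4 ≤ Fintype.card V := by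
    have := hE ▸ G.card_edgeFinset_le_card_choose_two
    by_contra! h
    interval_cases Fintype.card V <;> simp at this
  have : Nontrivial V := Fintype.one_lt_card_iff_nontrivial.1 (by omega)
  have hdeg : ∀ v, G.degree v < 5 := fun v => (G.degree_lt_card_verts v).trans_le hn5
  set c : ℕ → ℕ := fun k => #{v | G.degree v = k} with hc
  have hcount : ∑ k ∈ range 5, c k • 1 = Fintype.card V := by
    rw [← sum_comp_eq_sum_range_card_nsmul _ _ hdeg]; simp
  have hsum : ∑ k ∈ range 5, c k • k = 8 := by
    rw [← sum_comp_eq_sum_range_card_nsmul _ _ hdeg, sum_degrees_eq_twice_card_edges, hE]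
  have hc0 : c 0 = 0 := by
    simpa [hc, filter_eq_empty_iff] using
      fun v => (hG.preconnected.degree_pos_of_nontrivial v).ne'
  have hc4 : Fintype.card V = 4 → c 4 = 0 := fun h4 => by
    simpa [hc, filter_eq_empty_iff] using fun v => (h4 ▸ G.degree_lt_card_verts v).ne
  have hc31 : Fintype.card V = 4 → 2 ≤ c 3 → c 1 = 0 := fun h4 h3 =>
    card_degree_eq_one_eq_zero_of_two_universal (by omega) (by rw [h4]; exact h3)
  rw [sum_comp_eq_sum_range_card_nsmul _ (fun k => (2 : ℤ) ^ k - 1) hdeg]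
  simp only [hc, sum_range_succ, range_zero, sum_empty, smul_eq_mul, nsmul_eq_mul,
    Set.mem_insert_iff, Set.mem_singleton_iff] at *
  norm_num
  omega

end SimpleGraph

def edgeListGraph {n : ℕ} (l : List (Fin n × Fin n)) : SimpleGraph (Fin n) :=
  SimpleGraph.fromRel fun a b => (a, b) ∈ l

instance {n : ℕ} (l : List (Fin n × Fin n)) : DecidableRel (edgeListGraph l).Adj :=
  fun a b => decidable_of_iff' _ (SimpleGraph.fromRel_adj _ a b)

theorem stmt7 :
    (∀ (V : Type) (_ : Fintype V) (_ : DecidableEq V) (G : SimpleGraph V)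
        (_ : DecidableRel G.Adj), G.Connected → G.edgeFinset.card = 4 →
        (∑ i : V, ((2 : ℤ) ^ G.degree i - 1)) - 4 ∈
          ({7, 8, 9, 10, 15} : Set ℤ)) ∧
    (∀ r ∈ ({7, 8, 9, 10, 15} : Set ℤ),
      ∃ (V : Type) (_ : Fintype V) (_ : DecidableEq V) (G : SimpleGraph V)
        (_ : DecidableRel G.Adj), G.Connected ∧ G.edgeFinset.card = 4 ∧
        (∑ i : V, ((2 : ℤ) ^ G.degree i - 1)) - 4 = r) := by
  refine ⟨fun V _ _ G _ hG hE => sum_two_pow_degree_sub_one_sub_four_mem hG hE, fun r hr => ?_⟩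
  simp only [Set.mem_insert_iff, Set.mem_singleton_iff] at hr
  rcases hr with rfl | rfl | rfl | rfl | rfl
  · exact ⟨Fin 5, inferInstance, inferInstance,
      edgeListGraph [(0, 1), (1, 2), (2, 3), (3, 4)], inferInstance, by decide⟩
  · exact ⟨Fin 4, inferInstance, inferInstance,
      edgeListGraph [(0, 1), (1, 2), (2, 3), (3, 0)], inferInstance, by decide⟩
  · exact ⟨Fin 5, inferInstance, inferInstance,
      edgeListGraph [(0, 1), (0, 2), (0, 3), (3, 4)], inferInstance, by decide⟩
  · exact ⟨Fin 4, inferInstance, inferInstance,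
      edgeListGraph [(0, 1), (1, 2), (2, 0), (2, 3)], inferInstance, by decide⟩
  · exact ⟨Fin 5, inferInstance, inferInstance,
      edgeListGraph [(0, 1), (0, 2), (0, 3), (0, 4)], inferInstance, by decide⟩
end

section
/- Let K be a field, S = K[x_{ij} : 1 ≤ i,j ≤ n], G a simple graph on [n] containing an edge {i,j} with i ≠ j. Then the variable x_{ji} is a nonzerodivisor on S/P_G. -/
open MvPolynomial

/-- The diagonal 2-minor `f_{ij} = x_{ii}x_{jj} - x_{ij}x_{ji}`. -/
noncomputable def diagMinor (K : Type*) [Field K] (n : ℕ) (i j : Fin n) :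
    MvPolynomial (Fin n × Fin n) K :=
  X (i, i) * X (j, j) - X (i, j) * X (j, i)

/-- The ideal `P_G` generated by the diagonal 2-minors of the edges of `G`. -/
noncomputable def diagIdeal (K : Type*) [Field K] (n : ℕ)
    (G : SimpleGraph (Fin n)) : Ideal (MvPolynomial (Fin n × Fin n) K) :=
  Ideal.span {f | ∃ i j : Fin n, G.Adj i j ∧ i < j ∧ f = diagMinor K n i j}

/-!
Fix the edge `{i, j}` and write `u = x_ij`, `v = x_ji`, `c = x_ii x_jj`. No other minor involves
`u` or `v`, so if `A` is the polynomial ring in the remaining variables and `J ⊆ A` the ideal of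
the other minors, then `S ⧸ P_G ≅ (A ⧸ J)[u][v] ⧸ (c - uv)`. Modulo `c - uv`, the variable `v` is
a nonzerodivisor as soon as `c` is one on `A ⧸ J` (put `v = 0`), and every nonzerodivisor of
`A ⧸ J` stays one (reduce modulo it: `c - uv` keeps the regular leading coefficient `-u`).
Adding the edges one at a time, this shows that the diagonal variables, hence `c`, are
nonzerodivisors modulo the ideal of any set of edges.
-/

open nonZeroDivisors
open scoped Polynomial

-- If `d, w` is a regular sequence, then so is `w, d`.
theorem dvd_of_dvd_mul_swap {B : Type*} [CommRing B] {d w f : B} (hd : d ∈ B⁰)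
    (hw : ∀ g, d ∣ w * g → d ∣ g) (h : w ∣ d * f) : w ∣ f := by
  obtain ⟨g, hg⟩ := h
  obtain ⟨k, rfl⟩ := hw g ⟨f, hg.symm⟩
  refine ⟨k, (mul_cancel_left_mem_nonZeroDivisors hd).mp ?_⟩
  rw [hg]
  ring

theorem Ideal.Quotient.mk_mem_nonZeroDivisors_iff {R : Type*} [CommRing R] {I : Ideal R}
    {r : R} : Ideal.Quotient.mk I r ∈ (R ⧸ I)⁰ ↔ ∀ f, r * f ∈ I → f ∈ I := by
  simp only [mem_nonZeroDivisors_iff_left, Ideal.Quotient.mk_surjective.forall, ← map_mul,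
    Ideal.Quotient.eq_zero_iff_mem]

namespace Polynomial

variable {D : Type*} [CommRing D]

-- In `D[X][X]` the inner variable plays `u` and the outer one `v`: `C (C c) - C X * X = c - uv`.

theorem C_C_sub_C_X_mul_X_mem_nonZeroDivisors (c : D) :
    (C (C c) - C X * X : D[X][X]) ∈ D[X][X]⁰ := by
  refine mem_nonzeroDivisors_of_coeff_mem 1 (mem_nonzeroDivisors_of_coeff_mem 1 ?_)
  simpa using (isUnit_one.neg : IsUnit (-1 : D)).mem_nonZeroDivisors

theorem dvd_of_dvd_X_mul {c : D} (hc : c ∈ D⁰) {f : D[X][X]}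
    (h : C (C c) - C X * X ∣ X * f) : C (C c) - C X * X ∣ f := by
  refine dvd_of_dvd_mul_swap X_mem_nonzeroDivisors (fun g hg => ?_) h
  have hCc : (C c : D[X]) ∈ D[X]⁰ := mem_nonzeroDivisors_of_coeff_mem 0 (by simpa using hc)
  rw [X_dvd_iff, mul_coeff_zero] at hg
  rw [X_dvd_iff, ← mul_left_mem_nonZeroDivisors_eq_zero_iff hCc]
  simpa using hg

theorem dvd_of_dvd_C_C_mul {c d : D} (hd : d ∈ D⁰) {f : D[X][X]}
    (h : C (C c) - C X * X ∣ C (C d) * f) : C (C c) - C X * X ∣ f := by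
  have hdd : (C (C d) : D[X][X]) ∈ D[X][X]⁰ :=
    mem_nonzeroDivisors_of_coeff_mem 0 (mem_nonzeroDivisors_of_coeff_mem 0 (by simpa using hd))
  set π : D[X][X] →+* (D ⧸ Ideal.span {d})[X][X] :=
    mapRingHom (mapRingHom (Ideal.Quotient.mk _))
  have hker : RingHom.ker π = Ideal.span {C (C d)} := by
    rw [ker_mapRingHom, ker_mapRingHom, Ideal.mk_ker, Ideal.map_span, Ideal.map_span,
      Set.image_singleton, Set.image_singleton]
  refine dvd_of_dvd_mul_swap hdd (fun g hg => ?_) h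
  rw [← Ideal.mem_span_singleton, ← hker, RingHom.mem_ker] at hg ⊢
  have hπw : π (C (C c) - C X * X) = C (C (Ideal.Quotient.mk _ c)) - C X * X := by simp [π]
  rwa [map_mul, hπw, mul_left_mem_nonZeroDivisors_eq_zero_iff
    (C_C_sub_C_X_mul_X_mem_nonZeroDivisors _)] at hg

end Polynomial

theorem mem_ker_sup_span_singleton_iff_dvd {S T F : Type*} [CommRing S] [CommRing T]
    [FunLike F S T] [RingHomClass F S T] {ρ : F} (hρ : Function.Surjective ρ) (g f : S) :
    f ∈ RingHom.ker ρ ⊔ Ideal.span {g} ↔ ρ g ∣ ρ f := by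
  rw [sup_comm, ← Ideal.comap_map_of_surjective' ρ hρ, Ideal.mem_comap, Ideal.map_span,
    Set.image_singleton, Ideal.mem_span_singleton]

section Split

variable {R : Type*} [CommRing R] {τ : Type*} [DecidableEq τ] {a b : τ}

def splitEquiv (hab : a ≠ b) : τ ≃ Option (Option {p // p ≠ a ∧ p ≠ b}) where
  toFun p := if hb : p = b then none else if ha : p = a then some none
    else some (some ⟨p, ha, hb⟩)
  invFun o := o.elim b (Option.elim · a Subtype.val)
  left_inv p := by
    by_cases hb : p = b
    · simp [hb]
    · by_cases ha : p = a
      · simp [ha, hab]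
      · simp [ha, hb]
  right_inv o := by
    rcases o with _ | _ | ⟨p, hpa, hpb⟩
    · simp
    · simp [hab]
    · simp [hpa, hpb]

variable (R) in
noncomputable def splitAlgEquiv (hab : a ≠ b) :
    MvPolynomial τ R ≃ₐ[R] (MvPolynomial {p // p ≠ a ∧ p ≠ b} R)[X][X] :=
  (renameEquiv R (splitEquiv hab)).trans
    ((optionEquivLeft R _).trans (Polynomial.mapAlgEquiv (optionEquivLeft R _)))

theorem splitAlgEquiv_X_left (hab : a ≠ b) :
    splitAlgEquiv R hab (X a) = Polynomial.C Polynomial.X := by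
  simp [splitAlgEquiv, splitEquiv, hab]

theorem splitAlgEquiv_X_right (hab : a ≠ b) : splitAlgEquiv R hab (X b) = Polynomial.X := by
  simp [splitAlgEquiv, splitEquiv]

theorem splitAlgEquiv_X_of_ne (hab : a ≠ b) {q : τ} (hqa : q ≠ a) (hqb : q ≠ b) :
    splitAlgEquiv R hab (X q) = Polynomial.C (Polynomial.C (X ⟨q, hqa, hqb⟩)) := by
  simp [splitAlgEquiv, splitEquiv, hqa, hqb]

theorem splitAlgEquiv_rename (hab : a ≠ b) (p : MvPolynomial {p // p ≠ a ∧ p ≠ b} R) :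
    splitAlgEquiv R hab (rename Subtype.val p) = Polynomial.C (Polynomial.C p) := by
  induction p using MvPolynomial.induction_on with
  | C r => simp [splitAlgEquiv]
  | add p q hp hq => simp only [map_add, hp, hq]
  | mul_X p q hp =>
    rw [map_mul, rename_X, map_mul, hp, splitAlgEquiv_X_of_ne hab q.2.1 q.2.2]
    simp

section SplitMap

variable {D : Type*} [CommRing D] (π : MvPolynomial {p // p ≠ a ∧ p ≠ b} R →+* D)

noncomputable def splitMap (hab : a ≠ b) : MvPolynomial τ R →+* D[X][X] :=
  (Polynomial.mapRingHom (Polynomial.mapRingHom π)).comp (splitAlgEquiv R hab).toRingHom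

theorem splitMap_surjective (hab : a ≠ b) (hπ : Function.Surjective π) :
    Function.Surjective (splitMap π hab) :=
  (Polynomial.map_surjective _ (Polynomial.map_surjective _ hπ)).comp
    (splitAlgEquiv R hab).surjective

theorem ker_splitMap (hab : a ≠ b) :
    RingHom.ker (splitMap π hab) = (RingHom.ker π).map (rename Subtype.val) := by
  have hCC : (splitAlgEquiv R hab).symm.toRingHom.comp (Polynomial.C.comp Polynomial.C) =
      (rename Subtype.val).toRingHom := by
    refine RingHom.ext fun p => ?_
    simp [AlgEquiv.symm_apply_eq, splitAlgEquiv_rename]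
  rw [splitMap, ← RingHom.comap_ker, Polynomial.ker_mapRingHom, Polynomial.ker_mapRingHom,
    Ideal.map_map]
  change Ideal.comap (splitAlgEquiv R hab).toRingEquiv _ = _
  rw [← Ideal.map_symm, ← Ideal.map_coe, Ideal.map_map]
  exact congrArg (Ideal.map · (RingHom.ker π)) hCC

theorem splitMap_X_left (hab : a ≠ b) : splitMap π hab (X a) = Polynomial.C Polynomial.X := by
  simp [splitMap, splitAlgEquiv_X_left]

theorem splitMap_X_right (hab : a ≠ b) : splitMap π hab (X b) = Polynomial.X := by
  simp [splitMap, splitAlgEquiv_X_right]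

theorem splitMap_rename (hab : a ≠ b) (p : MvPolynomial {p // p ≠ a ∧ p ≠ b} R) :
    splitMap π hab (rename Subtype.val p) = Polynomial.C (Polynomial.C (π p)) := by
  simp [splitMap, splitAlgEquiv_rename]

end SplitMap

theorem mem_of_X_right_mul_mem_map_rename_sup (hab : a ≠ b)
    {J : Ideal (MvPolynomial {p // p ≠ a ∧ p ≠ b} R)} {c : MvPolynomial {p // p ≠ a ∧ p ≠ b} R}
    (hc : ∀ y, c * y ∈ J → y ∈ J) {f : MvPolynomial τ R}
    (hf : X b * f ∈ J.map (rename Subtype.val) ⊔ Ideal.span {rename Subtype.val c - X a * X b}) :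
    f ∈ J.map (rename Subtype.val) ⊔ Ideal.span {rename Subtype.val c - X a * X b} := by
  rw [← Ideal.mk_ker (I := J), ← ker_splitMap _ hab,
    mem_ker_sup_span_singleton_iff_dvd (splitMap_surjective _ hab Ideal.Quotient.mk_surjective)]
    at hf ⊢
  simp only [map_mul, map_sub, splitMap_rename, splitMap_X_left, splitMap_X_right] at hf ⊢
  exact Polynomial.dvd_of_dvd_X_mul (Ideal.Quotient.mk_mem_nonZeroDivisors_iff.mpr hc) hf

theorem mem_of_rename_mul_mem_map_rename_sup (hab : a ≠ b)
    {J : Ideal (MvPolynomial {p // p ≠ a ∧ p ≠ b} R)} {c d : MvPolynomial {p // p ≠ a ∧ p ≠ b} R}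
    (hd : ∀ y, d * y ∈ J → y ∈ J) {f : MvPolynomial τ R}
    (hf : rename Subtype.val d * f ∈
      J.map (rename Subtype.val) ⊔ Ideal.span {rename Subtype.val c - X a * X b}) :
    f ∈ J.map (rename Subtype.val) ⊔ Ideal.span {rename Subtype.val c - X a * X b} := by
  rw [← Ideal.mk_ker (I := J), ← ker_splitMap _ hab,
    mem_ker_sup_span_singleton_iff_dvd (splitMap_surjective _ hab Ideal.Quotient.mk_surjective)]
    at hf ⊢
  simp only [map_mul, map_sub, splitMap_rename, splitMap_X_left, splitMap_X_right] at hf ⊢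
  exact Polynomial.dvd_of_dvd_C_C_mul (Ideal.Quotient.mk_mem_nonZeroDivisors_iff.mpr hd) hf

end Split

theorem Ideal.map_comap_span_of_subset_range {A S F : Type*} [CommRing A] [CommRing S]
    [FunLike F A S] [RingHomClass F A S] (f : F) {s : Set S} (hs : s ⊆ Set.range f) :
    ((Ideal.span s).comap f).map f = Ideal.span s := by
  refine le_antisymm Ideal.map_comap_le (Ideal.span_le.2 fun x hx => ?_)
  obtain ⟨y, rfl⟩ := hs hx
  exact Ideal.mem_map_of_mem f (Ideal.subset_span hx)

section Graph

variable {K : Type*} [Field K] {n : ℕ}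

theorem diagMinor_comm (i j : Fin n) : diagMinor K n i j = diagMinor K n j i := by
  unfold diagMinor
  ring

variable (K n) in
noncomputable def edgeMinor : Sym2 (Fin n) → MvPolynomial (Fin n × Fin n) K :=
  Sym2.lift ⟨diagMinor K n, diagMinor_comm⟩

@[simp]
theorem edgeMinor_mk (i j : Fin n) : edgeMinor K n s(i, j) = diagMinor K n i j := rfl

-- `P_E` for any set `E` of edges, so that edges can be added one at a time.
variable (K n) in
noncomputable def minorIdeal (E : Set (Sym2 (Fin n))) : Ideal (MvPolynomial (Fin n × Fin n) K) :=
  Ideal.span (edgeMinor K n '' E)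

theorem diagIdeal_eq_minorIdeal (G : SimpleGraph (Fin n)) :
    diagIdeal K n G = minorIdeal K n G.edgeSet := by
  refine congrArg Ideal.span (Set.ext fun f => ⟨?_, ?_⟩)
  · rintro ⟨i, j, hij, -, rfl⟩
    exact ⟨s(i, j), hij, rfl⟩
  · rintro ⟨e, he, rfl⟩
    induction e using Sym2.ind with | _ i j => ?_
    rcases lt_or_gt_of_ne (G.ne_of_adj he) with h | h
    · exact ⟨i, j, he, h, rfl⟩
    · exact ⟨j, i, he.symm, h, diagMinor_comm i j⟩

variable (K) in
noncomputable abbrev renameOffEdge (i j : Fin n) :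
    MvPolynomial {p : Fin n × Fin n // p ≠ (i, j) ∧ p ≠ (j, i)} K →ₐ[K]
      MvPolynomial (Fin n × Fin n) K :=
  rename Subtype.val

theorem diag_ne_of_ne {i j : Fin n} (hij : i ≠ j) (m : Fin n) :
    (m, m) ≠ (i, j) ∧ (m, m) ≠ (j, i) := by
  grind

theorem edgeMinor_mem_range_renameOffEdge {i j : Fin n} (hij : i ≠ j) {e : Sym2 (Fin n)}
    (he : e ≠ s(i, j)) : edgeMinor K n e ∈ Set.range (renameOffEdge K i j) := by
  induction e using Sym2.ind with | _ k l => ?_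
  have hX : ∀ p (hp : p ≠ (i, j) ∧ p ≠ (j, i)), X p ∈ (renameOffEdge K i j).range :=
    fun p hp => ⟨X ⟨p, hp⟩, rename_X _ _⟩
  have hkl : (k, l) ≠ (i, j) ∧ (k, l) ≠ (j, i) := by
    refine ⟨fun h => he ?_, fun h => he ?_⟩ <;> simp_all
  have hlk : (l, k) ≠ (i, j) ∧ (l, k) ≠ (j, i) := by
    refine ⟨fun h => he ?_, fun h => he ?_⟩ <;> simp_all
  rw [edgeMinor_mk, diagMinor]
  exact sub_mem (mul_mem (hX _ (diag_ne_of_ne hij k)) (hX _ (diag_ne_of_ne hij l)))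
    (mul_mem (hX _ hkl) (hX _ hlk))

theorem minorIdeal_insert {i j : Fin n} (hij : i ≠ j) {E : Set (Sym2 (Fin n))}
    (he : s(i, j) ∉ E) :
    minorIdeal K n (insert s(i, j) E) =
      ((minorIdeal K n E).comap (renameOffEdge K i j)).map (renameOffEdge K i j) ⊔
        Ideal.span {renameOffEdge K i j (X ⟨(i, i), diag_ne_of_ne hij i⟩ *
          X ⟨(j, j), diag_ne_of_ne hij j⟩) - X (i, j) * X (j, i)} := by
  rw [minorIdeal, minorIdeal, Set.image_insert_eq, Ideal.span_insert, sup_comm,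
    Ideal.map_comap_span_of_subset_range]
  · simp [diagMinor]
  · rintro _ ⟨e, he', rfl⟩
    exact edgeMinor_mem_range_renameOffEdge hij (ne_of_mem_of_not_mem he' he)

theorem mem_minorIdeal_of_X_diag_mul_mem {E : Finset (Sym2 (Fin n))} (hE : ∀ e ∈ E, ¬e.IsDiag)
    (d : Fin n) {f : MvPolynomial (Fin n × Fin n) K} (hf : X (d, d) * f ∈ minorIdeal K n E) :
    f ∈ minorIdeal K n E := by
  induction E using Finset.induction_on generalizing f with
  | empty =>
    simp only [minorIdeal, Finset.coe_empty, Set.image_empty, Ideal.span_empty,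
      Ideal.mem_bot] at hf ⊢
    exact (mul_eq_zero.mp hf).resolve_left (X_ne_zero _)
  | insert e E he ih =>
    induction e using Sym2.ind with | _ i j => ?_
    have hij : i ≠ j := fun h => hE _ (Finset.mem_insert_self _ _) (Sym2.mk_isDiag_iff.2 h)
    rw [Finset.coe_insert, minorIdeal_insert hij he] at hf ⊢
    rw [show X (d, d) = renameOffEdge K i j (X ⟨(d, d), diag_ne_of_ne hij d⟩) by simp] at hf
    refine mem_of_rename_mul_mem_map_rename_sup (fun h => hij (congrArg Prod.fst h))
      (fun y hy => ih (fun e he' => hE e (Finset.mem_insert_of_mem he')) ?_) hf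
    simpa using hy

theorem mem_minorIdeal_insert_of_X_mul_mem {i j : Fin n} (hij : i ≠ j)
    {E : Finset (Sym2 (Fin n))} (hE : ∀ e ∈ E, ¬e.IsDiag) (he : s(i, j) ∉ E)
    {f : MvPolynomial (Fin n × Fin n) K}
    (hf : X (j, i) * f ∈ minorIdeal K n (insert s(i, j) E)) :
    f ∈ minorIdeal K n (insert s(i, j) E) := by
  rw [minorIdeal_insert hij he] at hf ⊢
  refine mem_of_X_right_mul_mem_map_rename_sup (fun h => hij (congrArg Prod.fst h))
    (fun y hy => ?_) hf
  rw [Ideal.mem_comap, map_mul, map_mul, rename_X, rename_X, mul_assoc] at hy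
  exact mem_minorIdeal_of_X_diag_mul_mem hE j (mem_minorIdeal_of_X_diag_mul_mem hE i hy)

end Graph

theorem stmt13 (K : Type*) [Field K] (n : ℕ) (G : SimpleGraph (Fin n))
    (i j : Fin n) (hij : G.Adj i j) :
    Ideal.Quotient.mk (diagIdeal K n G) (X (j, i)) ∈
      nonZeroDivisors (MvPolynomial (Fin n × Fin n) K ⧸ diagIdeal K n G) := by
  classical
  have he : s(i, j) ∈ G.edgeFinset := G.mem_edgeFinset.2 hij
  rw [Ideal.Quotient.mk_mem_nonZeroDivisors_iff, diagIdeal_eq_minorIdeal, ← G.coe_edgeFinset,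
    ← Finset.insert_erase he, Finset.coe_insert]
  exact fun f => mem_minorIdeal_insert_of_X_mul_mem hij.ne
    (fun e he' => G.not_isDiag_of_mem_edgeSet (G.mem_edgeFinset.1 (Finset.mem_of_mem_erase he')))
    (Finset.notMem_erase _ _)
end
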